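/- arXiv:2307.16271 — 2 statements merged into one kernel-verified Lean document; each statement's English description precedes it below -/
import Mathlib

section
/- Let φ : A → B be a homomorphism of commutative rings and p a prime number. Suppose (1) B is generated as an A-algebra by elements b such that for some n ≥ 1 both p^n·b and b^{p^n} lie in the image of φ, and (2) every element of the kernel of φ is nilpotent. Then the induced map Spec B → Spec A is a bijection. -/
/-!
Call `b` *`p`-radical at level `n`* over a subring `R` when both `p ^ n * b` and `b ^ p ^ n`
lie in `R`. These elements form a subring: for sums, expand `(b + c) ^ p ^ N` binomially; the
terms with `p ^ n ∣ i` are products of `b ^ p ^ n`, `c ^ p ^ n`, and in the remaining terms the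
binomial coefficient `(p ^ N).choose i` is divisible by a large power of `p`, which absorbs the
powers of `b` and `c`. Hence every element of `B` has a `p`-power in the image of `A`, and a ring
map with nilpotent kernel having that property induces a homeomorphism on spectra.
-/

theorem Nat.Prime.pow_dvd_choose_prime_pow {p N M K i : ℕ} (hp : p.Prime) (hi0 : i ≠ 0)
    (hiN : i ≤ p ^ N) (hM : ¬ p ^ M ∣ i) (hMKN : M + K ≤ N) : p ^ K ∣ (p ^ N).choose i := by
  have hmult : multiplicity p i < M := by
    by_contra! h
    exact hM ((pow_dvd_pow p h).trans (pow_multiplicity_dvd p i))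
  refine pow_dvd_of_le_emultiplicity ?_
  rw [hp.emultiplicity_choose_prime_pow hiN hi0]
  exact_mod_cast (by omega : K ≤ N - multiplicity p i)

namespace Subring

variable {S : Type*} [CommRing S] (R : Subring S) (p : ℕ)

def IsPRadicalAt (n : ℕ) (b : S) : Prop :=
  (p : S) ^ n * b ∈ R ∧ b ^ p ^ n ∈ R

variable {R p} {n m : ℕ} {b c : S}

theorem isPRadicalAt_zero_of_mem (hb : b ∈ R) : R.IsPRadicalAt p 0 b := by
  simpa [IsPRadicalAt] using hb

theorem IsPRadicalAt.mono (hb : R.IsPRadicalAt p n b) (hnm : n ≤ m) : R.IsPRadicalAt p m b := by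
  obtain ⟨k, rfl⟩ := Nat.exists_eq_add_of_le hnm
  constructor
  · rw [pow_add, mul_comm ((p : S) ^ n), mul_assoc]
    exact mul_mem (pow_mem (natCast_mem R p) k) hb.1
  · rw [pow_add, pow_mul]
    exact pow_mem hb.2 _

theorem IsPRadicalAt.neg (hb : R.IsPRadicalAt p n b) : R.IsPRadicalAt p n (-b) := by
  constructor
  · rw [mul_neg]
    exact neg_mem hb.1
  · rw [neg_pow]
    exact mul_mem (pow_mem (neg_mem (one_mem R)) _) hb.2

theorem IsPRadicalAt.mul (hb : R.IsPRadicalAt p n b) (hc : R.IsPRadicalAt p m c) :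
    R.IsPRadicalAt p (n + m) (b * c) := by
  constructor
  · rw [show (p : S) ^ (n + m) * (b * c) = ((p : S) ^ n * b) * ((p : S) ^ m * c) by ring]
    exact mul_mem hb.1 hc.1
  · rw [mul_pow, pow_add, pow_mul, mul_comm (p ^ n), pow_mul]
    exact mul_mem (pow_mem hb.2 _) (pow_mem hc.2 _)

theorem IsPRadicalAt.natCast_pow_mul_pow_mem (hp : 0 < p) (hb : R.IsPRadicalAt p n b) (i : ℕ) :
    (p : S) ^ (n * p ^ n) * b ^ i ∈ R := by
  obtain ⟨q, r, hr, rfl⟩ : ∃ q r, r < p ^ n ∧ i = p ^ n * q + r :=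
    ⟨i / p ^ n, i % p ^ n, Nat.mod_lt _ (pow_pos hp n), (Nat.div_add_mod i _).symm⟩
  obtain ⟨s, hs⟩ := Nat.exists_eq_add_of_lt hr
  have key : (p : S) ^ (n * p ^ n) * b ^ (p ^ n * q + r)
      = (b ^ p ^ n) ^ q * (((p : S) ^ n * b) ^ r * (p : S) ^ (n * (s + 1))) := by
    rw [hs]; ring
  rw [key]
  exact mul_mem (pow_mem hb.2 q) (mul_mem (pow_mem hb.1 r) (pow_mem (natCast_mem R p) _))

theorem IsPRadicalAt.choose_mul_pow_mul_pow_mem (hp : p.Prime) (hb : R.IsPRadicalAt p n b)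
    (hc : R.IsPRadicalAt p n c) {i : ℕ} (hi : i ≤ p ^ (n + 2 * (n * p ^ n))) :
    b ^ i * c ^ (p ^ (n + 2 * (n * p ^ n)) - i) * ((p ^ (n + 2 * (n * p ^ n))).choose i : S)
      ∈ R := by
  set N := n + 2 * (n * p ^ n)
  by_cases hdvd : p ^ n ∣ i
  · obtain ⟨u, hu⟩ := hdvd
    obtain ⟨v, hv⟩ : p ^ n ∣ p ^ N - i := Nat.dvd_sub (pow_dvd_pow p (by omega)) ⟨u, hu⟩
    rw [hv, hu, pow_mul, pow_mul]
    exact mul_mem (mul_mem (pow_mem hb.2 u) (pow_mem hc.2 v)) (natCast_mem R _)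
  · -- the factor `p ^ (2 * (n * p ^ n))` of the binomial coefficient absorbs both powers
    have hi0 : i ≠ 0 := by rintro rfl; exact hdvd (dvd_zero _)
    obtain ⟨C, hC⟩ := hp.pow_dvd_choose_prime_pow hi0 hi hdvd (le_refl N)
    have key : b ^ i * c ^ (p ^ N - i) * ((p ^ N).choose i : S)
        = ((p : S) ^ (n * p ^ n) * b ^ i) * ((p : S) ^ (n * p ^ n) * c ^ (p ^ N - i)) * C := by
      rw [hC]; push_cast; ring
    rw [key]
    exact mul_mem (mul_mem (hb.natCast_pow_mul_pow_mem hp.pos i)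
      (hc.natCast_pow_mul_pow_mem hp.pos _)) (natCast_mem R C)

theorem IsPRadicalAt.add (hp : p.Prime) (hb : R.IsPRadicalAt p n b)
    (hc : R.IsPRadicalAt p n c) : R.IsPRadicalAt p (n + 2 * (n * p ^ n)) (b + c) := by
  constructor
  · rw [pow_add, mul_comm ((p : S) ^ n), mul_assoc, mul_add]
    exact mul_mem (pow_mem (natCast_mem R p) _) (add_mem hb.1 hc.1)
  · rw [add_pow]
    exact sum_mem fun i hi =>
      hb.choose_mul_pow_mul_pow_mem hp hc (Nat.lt_succ_iff.1 (Finset.mem_range.1 hi))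

def pRadicalClosure (hp : p.Prime) : Subring S where
  carrier := {b | ∃ n, R.IsPRadicalAt p n b}
  zero_mem' := ⟨0, isPRadicalAt_zero_of_mem (zero_mem R)⟩
  one_mem' := ⟨0, isPRadicalAt_zero_of_mem (one_mem R)⟩
  neg_mem' := fun ⟨n, hb⟩ => ⟨n, hb.neg⟩
  mul_mem' := fun ⟨n, hb⟩ ⟨m, hc⟩ => ⟨n + m, hb.mul hc⟩
  add_mem' := fun ⟨n, hb⟩ ⟨m, hc⟩ =>
    ⟨_, (hb.mono (le_max_left n m)).add hp (hc.mono (le_max_right n m))⟩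

theorem le_pRadicalClosure (hp : p.Prime) : R ≤ R.pRadicalClosure hp :=
  fun _ hb => ⟨0, isPRadicalAt_zero_of_mem hb⟩

end Subring

theorem spec_bijective_of_generators_and_nilpotent_kernel
    (A B : Type*) [CommRing A] [CommRing B] [Algebra A B] (p : ℕ) (hp : p.Prime)
    (h1 : Algebra.adjoin A
        {b : B | ∃ n : ℕ, 1 ≤ n ∧ ((p ^ n : ℕ) • b) ∈ (algebraMap A B).range ∧
          b ^ p ^ n ∈ (algebraMap A B).range} = ⊤)
    (h2 : ∀ a ∈ RingHom.ker (algebraMap A B), IsNilpotent a) :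
    Function.Bijective (PrimeSpectrum.comap (algebraMap A B)) := by
  set R := (algebraMap A B).range
  have hR (b : B) : b ∈ R.pRadicalClosure hp := by
    have hb : b ∈ Algebra.adjoin A _ := h1 ▸ Algebra.mem_top
    rw [Algebra.mem_adjoin_iff] at hb
    refine Subring.closure_le.2 (Set.union_subset ?_ ?_) hb
    · rintro _ ⟨a, rfl⟩
      exact R.le_pRadicalClosure hp ⟨a, rfl⟩
    · rintro b ⟨n, -, hpb, hbp⟩
      exact ⟨n, by rwa [nsmul_eq_mul, Nat.cast_pow] at hpb, hbp⟩
  refine (PrimeSpectrum.isHomeomorph_comap _ (fun b => ?_)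
    fun a ha => mem_nilradical.2 (h2 a ha)).bijective
  obtain ⟨n, -, hbn⟩ := hR b
  exact ⟨p ^ n, pow_pos hp.pos n, hbn⟩
end

section
/- Let A be a commutative ring containing a field of positive characteristic p and let φ : A → B be a homomorphism of commutative rings such that every element of ker φ is nilpotent and for every b ∈ B there is n ≥ 1 with b^{p^n} in the image of φ (i.e., φ is an F-isomorphism). Then Spec B → Spec A is a homeomorphism. -/
theorem spec_homeomorph_of_F_isomorphism_general
    (A B : Type*) [CommRing A] [CommRing B]
    (p : ℕ) (hp : p.Prime)
    (φ : A →+* B)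
    (hker : ∀ a ∈ RingHom.ker φ, IsNilpotent a)
    (hsurj : ∀ b : B, ∃ n : ℕ, 1 ≤ n ∧ b ^ p ^ n ∈ φ.range) :
    IsHomeomorph (PrimeSpectrum.comap φ) := by
  refine PrimeSpectrum.isHomeomorph_comap φ (fun b ↦ ?_)
    (fun a ha ↦ mem_nilradical.mpr (hker a ha))
  obtain ⟨n, -, hb⟩ := hsurj b
  exact ⟨p ^ n, pow_pos hp.pos n, hb⟩

theorem spec_homeomorph_of_F_isomorphism
    (k A B : Type*) [Field k] [CommRing A] [CommRing B] [Algebra k A]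
    (p : ℕ) (hp : p.Prime) [CharP k p]
    (φ : A →+* B)
    (hker : ∀ a ∈ RingHom.ker φ, IsNilpotent a)
    (hsurj : ∀ b : B, ∃ n : ℕ, 1 ≤ n ∧ b ^ p ^ n ∈ φ.range) :
    IsHomeomorph (PrimeSpectrum.comap φ) :=
  spec_homeomorph_of_F_isomorphism_general A B p hp φ hker hsurj
end
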